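/- arXiv:1905.13393 — 7 statements merged into one kernel-verified Lean document; each statement's English description precedes it below -/
import Mathlib

section
/- Let v be a nonzero element of the algebraic closure K of F_q and let f(x) = (x + 1/x)^2/4. Then f(v) lies in (the image of) F_q if and only if v^{2(q-1)} = 1 or v^{2(q+1)} = 1. -/
/-!
An element of the algebraic closure lies in `F_q` iff it is fixed by `x ↦ x ^ q`. For
`w = v + 1/v` the Frobenius gives `w ^ q = v ^ q + v ^ (-q)`, and then
`f(v) ^ q - f(v) = ((w ^ q) ^ 2 - w ^ 2) / 4 = (v ^ (2(q-1)) - 1) (v ^ (2(q+1)) - 1) / (4 v ^ (2q))`,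
which vanishes exactly when one of the two factors does; `q` odd makes `4` invertible.
-/

open Polynomial

theorem FiniteField.mem_range_algebraMap_iff_pow_card_eq {F L : Type*} [Field F] [Fintype F]
    [CommRing L] [IsDomain L] [Algebra F L] (x : L) :
    x ∈ Set.range (algebraMap F L) ↔ x ^ Fintype.card F = x := by
  refine ⟨fun ⟨a, ha⟩ ↦ ha ▸ by rw [← map_pow, FiniteField.pow_card], fun hx ↦ ?_⟩
  have hsplits : (X ^ Fintype.card F - X : F[X]).Splits := by
    rw [splits_iff_card_roots, FiniteField.roots_X_pow_card_sub_X,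
      FiniteField.X_pow_card_sub_X_natDegree_eq F Fintype.one_lt_card]
    rfl
  exact hsplits.mem_range_of_isRoot (FiniteField.X_pow_card_sub_X_ne_zero F Fintype.one_lt_card)
    (by simp [hx])

theorem FiniteField.two_ne_zero_of_odd_card {F : Type*} [Field F] [Fintype F]
    (hF : Odd (Fintype.card F)) : (2 : F) ≠ 0 :=
  Ring.two_ne_zero fun h ↦ by
    rw [FiniteField.even_card_iff_char_two, ← Nat.even_iff] at h
    exact Nat.not_even_iff_odd.mpr hF h

theorem sq_pow_add_inv_sub_sq_add_inv {K : Type*} [Field K] {v : K} (hv : v ≠ 0) {n : ℕ}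
    (hn : 1 ≤ n) :
    (v ^ n + (v ^ n)⁻¹) ^ 2 - (v + v⁻¹) ^ 2 =
      (v ^ (2 * (n - 1)) - 1) * (v ^ (2 * (n + 1)) - 1) / v ^ (2 * n) := by
  obtain ⟨m, rfl⟩ := Nat.exists_eq_add_of_le' hn
  simp only [Nat.add_sub_cancel]
  field_simp
  ring

/-- Let `q` be an odd prime power, `F = F_q`, `K` its algebraic closure,
and `f(x) = (x + 1/x)^2 / 4`. For nonzero `v ∈ K`, `f(v)` lies in the image of `F_q`
if and only if `v ^ (2(q-1)) = 1` or `v ^ (2(q+1)) = 1`. -/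
theorem f_mem_iff_root_of_unity {F : Type*} [Field F] [Fintype F]
    (hq : Odd (Fintype.card F)) (v : AlgebraicClosure F) (hv : v ≠ 0) :
    (v + 1 / v) ^ 2 / 4 ∈ Set.range (algebraMap F (AlgebraicClosure F)) ↔
      (v ^ (2 * (Fintype.card F - 1)) = 1 ∨ v ^ (2 * (Fintype.card F + 1)) = 1) := by
  set q := Fintype.card F
  have h4 : (4 : AlgebraicClosure F) ≠ 0 := by
    rw [← map_ofNat (algebraMap F _), _root_.map_ne_zero, show (4 : F) = 2 * 2 by norm_num]
    exact mul_self_ne_zero.mpr (FiniteField.two_ne_zero_of_odd_card hq)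
  have h4q : (4 : AlgebraicClosure F) ^ q = 4 :=
    (FiniteField.mem_range_algebraMap_iff_pow_card_eq _).mp ⟨4, map_ofNat _ 4⟩
  have hfrob : (v + v⁻¹) ^ q = v ^ q + (v ^ q)⁻¹ := by
    simpa using map_add (FiniteField.frobeniusAlgHom F (AlgebraicClosure F)) v v⁻¹
  have hdiff : ((v + 1 / v) ^ 2 / 4) ^ q - (v + 1 / v) ^ 2 / 4 =
      (v ^ (2 * (q - 1)) - 1) * (v ^ (2 * (q + 1)) - 1) / v ^ (2 * q) / 4 := by
    rw [← sq_pow_add_inv_sub_sq_add_inv hv Fintype.card_pos, ← hfrob, one_div, div_pow, h4q,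
      ← pow_mul, mul_comm 2 q, pow_mul]
    ring
  rw [FiniteField.mem_range_algebraMap_iff_pow_card_eq, ← sub_eq_zero, hdiff]
  simp [h4, hv, sub_eq_zero]
end

section
/- For every τ ∈ F_q there exists a nonzero v in the algebraic closure K of F_q with v^{2(q-1)} = 1 or v^{2(q+1)} = 1 such that (v + 1/v)^2/4 = τ (identifying F_q with its image in K). -/
/-!
Take `s` with `s² = τ` and `t` with `t² = s² - 1`, and put `v = s + t`. Then `v (s - t) = 1`, so
`v + 1/v = 2s` and `(v + 1/v)² / 4 = τ`. The Frobenius `x ↦ x^q` fixes `s²` and `t²`, hence sends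
`s ↦ ±s` and `t ↦ ±t`, so `(v^q)²` is `(s + t)² = v²` or `(s - t)² = v⁻²`.
-/

open FiniteField

lemma sq_add_eq_sq_add_or_sq_sub {R : Type*} [CommRing R] [NoZeroDivisors R] {s t s' t' : R}
    (hs : s' ^ 2 = s ^ 2) (ht : t' ^ 2 = t ^ 2) :
    (s' + t') ^ 2 = (s + t) ^ 2 ∨ (s' + t') ^ 2 = (s - t) ^ 2 := by
  rcases sq_eq_sq_iff_eq_or_eq_neg.mp hs with rfl | rfl <;>
    rcases sq_eq_sq_iff_eq_or_eq_neg.mp ht with rfl | rfl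
  · exact .inl rfl
  · exact .inr (by ring)
  · exact .inr (by ring)
  · exact .inl (by ring)

section GroupWithZero

variable {G₀ : Type*} [GroupWithZero G₀] {v : G₀} {n : ℕ}

lemma pow_two_mul_sub_one_eq_one (hv : v ≠ 0) (hn : n ≠ 0) (h : (v ^ n) ^ 2 = v ^ 2) :
    v ^ (2 * (n - 1)) = 1 := by
  refine mul_right_cancel₀ (pow_ne_zero 2 hv) ?_
  rw [one_mul, ← pow_add, ← h, ← pow_mul, mul_comm n]
  congr 1
  omega

lemma pow_two_mul_add_one_eq_one (hv : v ≠ 0) (h : (v ^ n) ^ 2 = v⁻¹ ^ 2) :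
    v ^ (2 * (n + 1)) = 1 := by
  rw [mul_add, mul_one, pow_add, mul_comm 2 n, pow_mul, h, inv_pow,
    inv_mul_cancel₀ (pow_ne_zero 2 hv)]

end GroupWithZero

lemma FiniteField.frobeniusAlgHom_sq_eq_sq {F K : Type*} [Field F] [Fintype F] [CommRing K]
    [Algebra F K] {x : K} (hx : x ^ 2 ∈ Set.range (algebraMap F K)) :
    frobeniusAlgHom F K x ^ 2 = x ^ 2 := by
  obtain ⟨c, hc⟩ := hx
  rw [← map_pow, ← hc, AlgHom.commutes]

lemma FiniteField.ringChar_ne_two_of_odd_card {F : Type*} [Field F] [Fintype F]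
    (hq : Odd (Fintype.card F)) : ringChar F ≠ 2 := by
  rw [Ne, even_card_iff_char_two, Nat.odd_iff.mp hq]
  exact one_ne_zero

/-- Let `q` be an odd prime power, `F = F_q`, `K` its algebraic closure.
For every `τ ∈ F_q` there exists a nonzero `v ∈ K` with `v ^ (2(q-1)) = 1` or
`v ^ (2(q+1)) = 1` such that `(v + 1/v)^2 / 4 = τ` (identifying `F_q` with its image). -/
theorem exists_orbit_rep {F : Type*} [Field F] [Fintype F]
    (hq : Odd (Fintype.card F)) (τ : F) :
    ∃ v : AlgebraicClosure F, v ≠ 0 ∧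
      (v ^ (2 * (Fintype.card F - 1)) = 1 ∨ v ^ (2 * (Fintype.card F + 1)) = 1) ∧
      (v + 1 / v) ^ 2 / 4 = algebraMap F (AlgebraicClosure F) τ := by
  set K := AlgebraicClosure F
  obtain ⟨s, hs⟩ := IsAlgClosed.exists_pow_nat_eq (algebraMap F K τ) two_pos
  obtain ⟨t, ht⟩ := IsAlgClosed.exists_pow_nat_eq (s ^ 2 - 1) two_pos
  have hmul : (s + t) * (s - t) = 1 := by linear_combination -ht
  have hv : s + t ≠ 0 := left_ne_zero_of_mul_eq_one hmul
  have hinv : (s + t)⁻¹ = s - t := (eq_inv_of_mul_eq_one_right hmul).symm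
  refine ⟨s + t, hv, ?_, ?_⟩
  · have hφs := frobeniusAlgHom_sq_eq_sq (F := F) ⟨τ, hs.symm⟩
    have hφt := frobeniusAlgHom_sq_eq_sq (F := F) ⟨τ - 1, by rw [ht, hs, map_sub, map_one]⟩
    rcases sq_add_eq_sq_add_or_sq_sub hφs hφt with h | h <;>
      rw [← map_add, coe_frobeniusAlgHom] at h
    · exact .inl (pow_two_mul_sub_one_eq_one hv Fintype.card_ne_zero h)
    · exact .inr (pow_two_mul_add_one_eq_one hv (hinv ▸ h))
  · have h2 : (2 : K) ≠ 0 :=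
      Ring.two_ne_zero (Algebra.ringChar_eq F K ▸ ringChar_ne_two_of_odd_card hq)
    have h4 : (4 : K) ≠ 0 := by
      rw [show (4 : K) = 2 * 2 by norm_num]
      exact mul_ne_zero h2 h2
    rw [one_div, hinv, ← hs, div_eq_iff h4]
    ring
end

section
/- Let τ ∈ F_q with τ ≠ 0 and τ ≠ 1, and let v be a nonzero element of the algebraic closure K of F_q with (v + 1/v)^2 = 4τ. Set A = χ(τ) and B = χ(τ-1), which both lie in {1, -1}. Then v^{q - A·B} = A (where A on the right is viewed as an element of K, and the exponent q - A·B is a positive integer). -/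
open scoped Classical

noncomputable def χ {F : Type*} [Field F] [Fintype F] (a : F) : ℤ :=
  if a = 0 then 0 else if IsSquare a then 1 else -1

/-!
Put `w = v + v⁻¹` and `u = v - v⁻¹`, so that `w² = 4τ` and `u² = 4(τ - 1)`. By Euler's criterion
the Frobenius `x ↦ x ^ q` sends a square root of `a ∈ F_q` to `χ(a)` times itself, hence
`v ^ q + v⁻¹ ^ q = A w` and `v ^ q - v⁻¹ ^ q = B u`. Adding the two, `v ^ q = A v` when `A = B`
and `v ^ q = A v⁻¹` when `A = -B`, which is `v ^ (q - A B) = A` in both cases.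
-/

section QuadraticChar

variable {F : Type*} [Field F] [Fintype F]

theorem χ_eq_quadraticChar (a : F) : χ a = quadraticChar F a := by
  simp only [χ, quadraticChar_apply, quadraticCharFun]

theorem quadraticChar_four_mul [DecidableEq F] (hF : ringChar F ≠ 2) (a : F) :
    quadraticChar F (4 * a) = quadraticChar F a := by
  rw [map_mul, show (4 : F) = 2 ^ 2 by norm_num, quadraticChar_sq_one' (Ring.two_ne_zero hF),
    one_mul]

theorem pow_card_eq_quadraticChar_mul [DecidableEq F] {L : Type*} [CommRing L] [Algebra F L]
    (hF : ringChar F ≠ 2) {a : F} {x : L} (hx : x ^ 2 = algebraMap F L a) :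
    x ^ Fintype.card F = quadraticChar F a * x := by
  have hcard : Fintype.card F = 2 * (Fintype.card F / 2) + 1 := by
    have := FiniteField.odd_card_of_char_ne_two hF
    omega
  calc x ^ Fintype.card F = algebraMap F L (a ^ (Fintype.card F / 2)) * x := by
        rw [map_pow, ← hx, ← pow_mul, ← pow_succ, ← hcard]
    _ = quadraticChar F a * x := by
        rw [← quadraticChar_eq_pow_of_char_ne_two' hF, map_intCast]

theorem pow_card_add_and_sub_inv_pow_card [DecidableEq F] {L : Type*} [Field L] [Algebra F L]
    (hF : ringChar F ≠ 2) {τ : F} {v : L} (hv : v ≠ 0)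
    (hw : (v + v⁻¹) ^ 2 = algebraMap F L (4 * τ)) :
    v ^ Fintype.card F + v⁻¹ ^ Fintype.card F = quadraticChar F τ * (v + v⁻¹) ∧
      v ^ Fintype.card F - v⁻¹ ^ Fintype.card F = quadraticChar F (τ - 1) * (v - v⁻¹) := by
  have hu : (v - v⁻¹) ^ 2 = algebraMap F L (4 * (τ - 1)) := by
    rw [mul_sub, mul_one, map_sub, ← hw, map_ofNat]
    linear_combination (-4 : L) * mul_inv_cancel₀ hv
  constructor
  · rw [← quadraticChar_four_mul hF, ← pow_card_eq_quadraticChar_mul hF hw]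
    exact (map_add (FiniteField.frobeniusAlgHom F L) v v⁻¹).symm
  · rw [← quadraticChar_four_mul hF, ← pow_card_eq_quadraticChar_mul hF hu]
    exact (map_sub (FiniteField.frobeniusAlgHom F L) v v⁻¹).symm

end QuadraticChar

theorem zpow_sub_mul_eq_of_pow_add_inv_pow {L : Type*} [Field L] (h2 : (2 : L) ≠ 0) {v : L}
    (hv : v ≠ 0) {A B : ℤ} (hA : A = 1 ∨ A = -1) (hB : B = 1 ∨ B = -1) {n : ℕ}
    (hplus : v ^ n + v⁻¹ ^ n = A * (v + v⁻¹)) (hminus : v ^ n - v⁻¹ ^ n = B * (v - v⁻¹)) :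
    v ^ ((n : ℤ) - A * B) = A := by
  have htwice : 2 * v ^ n = (A + B) * v + (A - B) * v⁻¹ := by
    linear_combination hplus + hminus
  have hvn : v ^ n = A * v ^ (A * B) := by
    refine mul_left_cancel₀ h2 (htwice.trans ?_)
    rcases hA with rfl | rfl <;> rcases hB with rfl | rfl <;> norm_num
  rw [zpow_sub₀ hv, zpow_natCast, hvn, mul_div_cancel_right₀ _ (zpow_ne_zero _ hv)]

/-- Let `τ ∈ F_q` with `τ ≠ 0, 1`, and let `v` be a nonzero element of the
algebraic closure `K` with `(v + 1/v)^2 = 4τ`.  With `A = χ(τ)` and `B = χ(τ-1)`, we have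
`v ^ (q - A·B) = A` (the exponent `q - A·B` being a positive integer, and `A` on the right
viewed in `K`). -/
theorem structure_theorem {F : Type*} [Field F] [Fintype F]
    (hq : Odd (Fintype.card F)) (τ : F) (h0 : τ ≠ 0) (h1 : τ ≠ 1)
    (v : AlgebraicClosure F) (hv : v ≠ 0)
    (hvτ : (v + 1 / v) ^ 2 = algebraMap F (AlgebraicClosure F) (4 * τ)) :
    v ^ ((Fintype.card F : ℤ) - χ τ * χ (τ - 1)).toNat
      = ((χ τ : ℤ) : AlgebraicClosure F) := by
  have hF : ringChar F ≠ 2 := fun h ↦ by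
    have := FiniteField.even_card_of_char_two h
    rw [Nat.odd_iff] at hq
    omega
  have hw : (v + v⁻¹) ^ 2 = algebraMap F (AlgebraicClosure F) (4 * τ) := by rwa [one_div] at hvτ
  obtain ⟨hplus, hminus⟩ := pow_card_add_and_sub_inv_pow_card hF hv hw
  have hA := quadraticChar_dichotomy h0
  have hB := quadraticChar_dichotomy (sub_ne_zero.mpr h1)
  have h2 : (2 : AlgebraicClosure F) ≠ 0 := by
    rw [← map_ofNat (algebraMap F (AlgebraicClosure F)) 2]
    exact (map_ne_zero _).mpr (Ring.two_ne_zero hF)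
  have hexp : 0 ≤ (Fintype.card F : ℤ) - quadraticChar F τ * quadraticChar F (τ - 1) := by
    have := Fintype.card_pos (α := F)
    rcases hA with hA | hA <;> rcases hB with hB | hB <;> rw [hA, hB] <;> omega
  rw [χ_eq_quadraticChar, χ_eq_quadraticChar, ← zpow_natCast, Int.toNat_of_nonneg hexp]
  exact zpow_sub_mul_eq_of_pow_add_inv_pow h2 hv hA hB hplus hminus
end

section
/- In F_q[x], D_m(x) = ∏_{b} (x - b), where the product is over all b ∈ F_q such that both 2 - b and 2 + b are nonsquares in F_q, and D_m denotes the image in F_q[x] of the m-th Dickson polynomial of the first kind. -/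
/-!
Both sides are monic, `D_m` being monic of degree `m`, so it suffices that every `b` in the set
`S` is a root of `D_m` and that `#S = m`. With `χ` the quadratic character,
`4 #S = ∑ b, (1 - χ (2 - b)) (1 - χ (2 + b)) = q - χ (-1)`, the cross term being the Jacobi sum
`J(χ, χ) = -χ (-1)`; and `χ (-1) = ε`.

For the roots, write `b = y + y⁻¹` with `y` in an algebraic closure, so that
`D_m(b) = y ^ m + y⁻¹ ^ m` vanishes as soon as `y ^ (2m) = -1`. Let `r = (q - 1) / 2`. Since
`(y + 1) ^ 2 = (2 + b) y` and `(2 + b) ^ r = -1` by Euler's criterion, the Frobenius identity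
`(y + 1) ^ q = y ^ q + 1` becomes `(y ^ r + 1) (y ^ (r + 1) + 1) = 0`. The same argument for `-y`,
using `2 - b`, leaves only the even one of `r` and `r + 1`, which is `2m`.
-/

open scoped Classical
open Polynomial

noncomputable def dicksonFst : ℕ → Polynomial ℤ
  | 0 => 2
  | 1 => Polynomial.X
  | (k + 2) => Polynomial.X * dicksonFst (k + 1) - dicksonFst k

theorem dicksonFst_eq_dickson : ∀ n, dicksonFst n = dickson 1 1 n
  | 0 => by norm_num [dicksonFst, dickson_zero]
  | 1 => by simp [dicksonFst, dickson_one]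
  | n + 2 => by
    simp [dicksonFst, dickson_add_two, dicksonFst_eq_dickson (n + 1), dicksonFst_eq_dickson n]

namespace Polynomial

variable {R : Type*} [CommRing R] (k : ℕ) (a : R)

theorem natDegree_dickson_le : ∀ n, (dickson k a n).natDegree ≤ n
  | 0 => by simpa [dickson_zero] using natDegree_sub_le (3 : R[X]) k
  | 1 => by simpa [dickson_one] using natDegree_X_le
  | n + 2 => by
    rw [dickson_add_two]
    refine (natDegree_sub_le _ _).trans (max_le ?_ ?_)
    · refine natDegree_mul_le.trans ?_
      linarith [natDegree_X_le (R := R), natDegree_dickson_le (n + 1)]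
    · exact (natDegree_C_mul_le _ _).trans ((natDegree_dickson_le n).trans (by omega))

theorem monic_and_natDegree_dickson_succ [Nontrivial R] : ∀ n, (dickson k a (n + 1)).Monic ∧
    (dickson k a (n + 1)).natDegree = n + 1
  | 0 => by simp [dickson_one, monic_X]
  | n + 1 => by
    obtain ⟨hmonic, hdeg⟩ := monic_and_natDegree_dickson_succ n
    have hX : (X * dickson k a (n + 1)).natDegree = n + 2 := by
      rw [natDegree_X_mul hmonic.ne_zero, hdeg]
    have hlt : (C a * dickson k a n).natDegree < (X * dickson k a (n + 1)).natDegree :=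
      hX ▸ (natDegree_C_mul_le _ _).trans_lt ((natDegree_dickson_le k a n).trans_lt (by omega))
    rw [dickson_add_two]
    exact ⟨(monic_X.mul hmonic).sub_of_left (degree_lt_degree hlt),
      (natDegree_sub_eq_left_of_natDegree_lt hlt).trans hX⟩

theorem dickson_one_one_eval_add_inv_eq_zero {x y : R} (h : x * y = 1) {n : ℕ}
    (hx : x ^ (2 * n) = -1) : (dickson 1 (1 : R) n).eval (x + y) = 0 := by
  rw [dickson_one_one_eval_add_inv x y h]
  linear_combination y ^ n * hx - x ^ n * congrArg (· ^ n) h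

theorem Monic.eq_prod_X_sub_C_of_isRoot [IsDomain R] {p : R[X]}
    (hp : p.Monic) {s : Finset R} (hcard : p.natDegree = s.card) (hroot : ∀ b ∈ s, p.IsRoot b) :
    p = ∏ b ∈ s, (X - C b) := by
  have hle : s.val ≤ p.roots := (Multiset.le_iff_subset s.nodup).2 fun b hb ↦
    (mem_roots hp.ne_zero).2 (hroot b hb)
  have hs : s.val = p.roots :=
    Multiset.eq_of_le_of_card_le hle (by simpa [hcard] using card_roots' p)
  rw [Finset.prod_eq_multiset_prod, hs,
    prod_multiset_X_sub_C_of_monic_of_roots_card_eq hp (by rw [← hs, hcard]; rfl)]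

end Polynomial

theorem FiniteField.pow_card_div_two_eq_neg_one_of_not_isSquare {F : Type*} [Field F] [Fintype F]
    (hF : ringChar F ≠ 2) {a : F} (ha : ¬IsSquare a) : a ^ (Fintype.card F / 2) = -1 :=
  (FiniteField.pow_dichotomy hF (by rintro rfl; exact ha .zero)).resolve_left
    fun h ↦ ha ((FiniteField.isSquare_iff hF (by rintro rfl; exact ha .zero)).2 h)

theorem IsAlgClosed.exists_sq_add_one_eq_mul {K : Type*} [Field K] [IsAlgClosed K] (B : K) :
    ∃ y : K, y ^ 2 + 1 = B * y := by
  obtain ⟨y, hy⟩ := IsAlgClosed.exists_root (C 1 * X ^ 2 + C (-B) * X + C 1)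
    (by rw [degree_quadratic one_ne_zero]; decide)
  exact ⟨y, by simp at hy; linear_combination hy⟩

theorem pow_card_div_two_eq_neg_one_or_of_sq_add_one_eq_mul {F K : Type*} [Field F] [Fintype F]
    [CommRing K] [IsDomain K] [Algebra F K] (hq : Odd (Fintype.card F)) {y B : K}
    (hy : y ^ 2 + 1 = B * y) (hB : (2 + B) ^ (Fintype.card F / 2) = -1) :
    y ^ (Fintype.card F / 2) = -1 ∨ y ^ (Fintype.card F / 2 + 1) = -1 := by
  set r := Fintype.card F / 2
  have hqr : Fintype.card F = 2 * r + 1 := by rcases hq with ⟨k, hk⟩; omega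
  have hfrob : (y + 1) ^ (2 * r + 1) = y ^ (2 * r + 1) + 1 := by
    simpa [FiniteField.coe_frobeniusAlgHom, hqr] using map_add (FiniteField.frobeniusAlgHom F K) y 1
  have hsq : (y + 1) ^ 2 = (2 + B) * y := by linear_combination hy
  have hpow : (y + 1) ^ (2 * r + 1) = -y ^ r * (y + 1) := by
    rw [pow_succ, pow_mul, hsq, mul_pow, hB]; ring
  have : (y ^ r + 1) * (y ^ (r + 1) + 1) = 0 := by
    linear_combination hpow - hfrob
  rcases mul_eq_zero.1 this with h | h
  exacts [.inl (eq_neg_of_add_eq_zero_left h), .inr (eq_neg_of_add_eq_zero_left h)]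

section QuadraticChar

variable {F : Type*} [Field F] [Fintype F]

theorem one_sub_quadraticChar_two_sub_mul_one_sub_quadraticChar_two_add (hF : ringChar F ≠ 2)
    (b : F) : (1 - quadraticChar F (2 - b)) * (1 - quadraticChar F (2 + b)) =
      if ¬IsSquare (2 - b) ∧ ¬IsSquare (2 + b) then 4 else 0 := by
  have h2 : (2 : F) ≠ 0 := Ring.two_ne_zero hF
  by_cases h₁ : 2 - b = 0
  · rw [show 2 + b = 2 ^ 2 by linear_combination -h₁, h₁, quadraticChar_sq_one' h2]
    simp
  by_cases h₂ : 2 + b = 0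
  · rw [show 2 - b = 2 ^ 2 by linear_combination -h₂, h₂, quadraticChar_sq_one' h2]
    simp
  simp only [quadraticChar_apply, quadraticCharFun, h₁, h₂, if_false]
  split_ifs <;> simp_all

theorem sum_quadraticChar_two_sub_mul_quadraticChar_two_add (hF : ringChar F ≠ 2) :
    ∑ b : F, quadraticChar F (2 - b) * quadraticChar F (2 + b) = -quadraticChar F (-1) := by
  have h2 : (2 : F) ≠ 0 := Ring.two_ne_zero hF
  have h4 : (4 : F) ≠ 0 := by rw [show (4 : F) = 2 ^ 2 by norm_num]; exact pow_ne_zero 2 h2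
  rw [← jacobiSum_nontrivial_inv (quadraticChar_ne_one hF), (quadraticChar_isQuadratic F).inv,
    jacobiSum]
  refine (Fintype.sum_equiv ((Equiv.mulLeft₀ 4 h4).trans (Equiv.subRight 2)) _ _
    fun x ↦ ?_).symm
  change _ = quadraticChar F (2 - (4 * x - 2)) * quadraticChar F (2 + (4 * x - 2))
  rw [show 2 - (4 * x - 2) = 2 ^ 2 * (1 - x) by ring, show 2 + (4 * x - 2) = 2 ^ 2 * x by ring,
    map_mul, map_mul, quadraticChar_sq_one' h2]
  ring

theorem four_mul_card_filter_not_isSquare_two_sub_and_two_add (hF : ringChar F ≠ 2) :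
    4 * ((Finset.univ.filter fun b : F ↦ ¬IsSquare (2 - b) ∧ ¬IsSquare (2 + b)).card : ℤ) =
      Fintype.card F - quadraticChar F (-1) := by
  have hsub : ∑ b : F, quadraticChar F (2 - b) = 0 :=
    (Equiv.sum_comp (Equiv.subLeft 2) (quadraticChar F)).trans (quadraticChar_sum_zero hF)
  have hadd : ∑ b : F, quadraticChar F (2 + b) = 0 :=
    (Equiv.sum_comp (Equiv.addLeft 2) (quadraticChar F)).trans (quadraticChar_sum_zero hF)
  calc 4 * ((Finset.univ.filter fun b : F ↦ ¬IsSquare (2 - b) ∧ ¬IsSquare (2 + b)).card : ℤ)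
      = ∑ b : F, (1 - quadraticChar F (2 - b)) * (1 - quadraticChar F (2 + b)) := by
        simp_rw [one_sub_quadraticChar_two_sub_mul_one_sub_quadraticChar_two_add hF]
        rw [Finset.sum_ite, Finset.sum_const, Finset.sum_const_zero, nsmul_eq_mul]
        ring
    _ = ∑ b : F, (1 - quadraticChar F (2 - b) - quadraticChar F (2 + b) +
          quadraticChar F (2 - b) * quadraticChar F (2 + b)) :=
        Finset.sum_congr rfl fun b _ ↦ by ring
    _ = Fintype.card F - quadraticChar F (-1) := by
        rw [Finset.sum_add_distrib, Finset.sum_sub_distrib, Finset.sum_sub_distrib, hsub, hadd,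
          sum_quadraticChar_two_sub_mul_quadraticChar_two_add hF]
        simp [sub_eq_add_neg]

end QuadraticChar

theorem pow_two_mul_eq_neg_one_of_sq_add_one_eq_mul {F K : Type*} [Field F] [Fintype F] [Field K]
    [Algebra F K] (hF : ringChar F ≠ 2) {m : ℕ}
    (hm : 4 * (m : ℤ) = Fintype.card F - (-1) ^ (Fintype.card F / 2)) {y B : K}
    (hy : y ^ 2 + 1 = B * y) (h₁ : (2 - B) ^ (Fintype.card F / 2) = -1)
    (h₂ : (2 + B) ^ (Fintype.card F / 2) = -1) : y ^ (2 * m) = -1 := by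
  have hq : Odd (Fintype.card F) := Nat.odd_iff.2 (FiniteField.odd_card_of_char_ne_two hF)
  have hK : (-1 : K) ≠ 1 := by
    simpa using (algebraMap F K).injective.ne (Ring.neg_one_ne_one_of_char_ne_two hF)
  have hpos := pow_card_div_two_eq_neg_one_or_of_sq_add_one_eq_mul hq hy h₂
  have hneg := pow_card_div_two_eq_neg_one_or_of_sq_add_one_eq_mul hq (y := -y) (B := -B)
    (by linear_combination hy) (by rwa [← sub_eq_add_neg])
  have even_exponent {e o : ℕ} (he : Even e) (ho : Odd o) (h : y ^ e = -1 ∨ y ^ o = -1)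
      (h' : (-y) ^ e = -1 ∨ (-y) ^ o = -1) : y ^ e = -1 := by
    rw [he.neg_pow, ho.neg_pow] at h'
    rcases h with h | h
    · exact h
    rcases h' with h' | h'
    · exact h'
    exact absurd (by linear_combination -h' - h) hK
  set r := Fintype.card F / 2
  have hqr : Fintype.card F = 2 * r + 1 := by rcases hq with ⟨k, hk⟩; omega
  rcases Nat.even_or_odd r with hr | hr
  · rw [hr.neg_one_pow] at hm
    rw [show 2 * m = r by omega]
    exact even_exponent hr hr.add_one hpos hneg
  · rw [hr.neg_one_pow] at hm
    rw [show 2 * m = r + 1 by omega]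
    exact even_exponent hr.add_one hr hpos.symm hneg.symm

theorem dickson_one_one_eval_eq_zero_of_not_isSquare {F : Type*} [Field F] [Fintype F]
    (hF : ringChar F ≠ 2) {m : ℕ}
    (hm : 4 * (m : ℤ) = Fintype.card F - (-1) ^ (Fintype.card F / 2)) {b : F}
    (h₁ : ¬IsSquare (2 - b)) (h₂ : ¬IsSquare (2 + b)) :
    (dickson 1 (1 : F) m).eval b = 0 := by
  let φ := algebraMap F (AlgebraicClosure F)
  obtain ⟨y, hy⟩ := IsAlgClosed.exists_sq_add_one_eq_mul (φ b)
  have hy0 : y ≠ 0 := by rintro rfl; simp at hy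
  have hb : φ b = y + y⁻¹ := by field_simp; linear_combination -hy
  have euler (c : F) (hc : ¬IsSquare c) : (φ c) ^ (Fintype.card F / 2) = -1 := by
    rw [← map_pow, FiniteField.pow_card_div_two_eq_neg_one_of_not_isSquare hF hc, map_neg,
      map_one]
  have hy2m := pow_two_mul_eq_neg_one_of_sq_add_one_eq_mul hF hm hy
    (by simpa [map_ofNat φ 2] using euler _ h₁) (by simpa [map_ofNat φ 2] using euler _ h₂)
  apply φ.injective
  rw [map_zero, ← eval₂_at_apply, ← eval_map, map_dickson, map_one, hb]
  exact dickson_one_one_eval_add_inv_eq_zero (mul_inv_cancel₀ hy0) hy2m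

/-- With `ε = (-1)^((q-1)/2)` and `m = (q - ε)/4` (a positive integer),
in `F_q[x]` we have `D_m(x) = ∏ (x - b)`, the product over all `b ∈ F_q` such that
both `2 - b` and `2 + b` are nonsquares in `F_q`. -/
theorem dickson_factorization {F : Type*} [Field F] [Fintype F]
    (hq : Odd (Fintype.card F)) (m : ℕ) (hm0 : 0 < m)
    (hm : 4 * (m : ℤ) = (Fintype.card F : ℤ) - (-1) ^ ((Fintype.card F - 1) / 2)) :
    (dicksonFst m).map (Int.castRingHom F) =
      ∏ b ∈ Finset.univ.filter (fun b : F => ¬ IsSquare (2 - b) ∧ ¬ IsSquare (2 + b)),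
        (Polynomial.X - Polynomial.C b) := by
  have hF : ringChar F ≠ 2 := fun h ↦ by
    simp [Nat.odd_iff, FiniteField.even_card_of_char_two h] at hq
  have hq2 : (Fintype.card F - 1) / 2 = Fintype.card F / 2 := by rcases hq with ⟨k, hk⟩; omega
  rw [hq2] at hm
  have hχ : quadraticChar F (-1) = (-1) ^ (Fintype.card F / 2) := by
    rw [quadraticChar_neg_one hF,
      ZMod.χ₄_eq_neg_one_pow (FiniteField.odd_card_of_char_ne_two hF)]
  have hcard := four_mul_card_filter_not_isSquare_two_sub_and_two_add hF
  obtain ⟨n, rfl⟩ : ∃ n, m = n + 1 := ⟨m - 1, by omega⟩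
  obtain ⟨hmonic, hdeg⟩ := monic_and_natDegree_dickson_succ 1 (1 : F) n
  rw [dicksonFst_eq_dickson, map_dickson, map_one]
  refine hmonic.eq_prod_X_sub_C_of_isRoot (by omega) fun b hb ↦ ?_
  rw [Finset.mem_filter] at hb
  exact dickson_one_one_eval_eq_zero_of_not_isSquare hF hm hb.2.1 hb.2.2
end

section
/- The product of all a ∈ F_q such that both a and 4 - a are nonsquares in F_q equals 2. -/
/-!
By Euler's criterion the nonsquares of `F_q` are the roots of `X ^ ((q - 1) / 2) + 1`, which
divides `X ^ q - X` and so splits with simple roots; hence `∏_{a nonsquare} (4 - a) = 2`.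
Among these factors, those with `4 - a` a nonsquare multiply to the product in question
(reflect `a ↦ 4 - a`). Those with `4 - a` a square are indexed by the set `T` of nonsquares `c`
with `4 - c` a square, and multiply to `1`: the `a` with `a (4 - a)` a nonsquare form
`T ⊔ (4 - T)`, and `a ↦ a (4 - a) = 4 - (2 - a) ^ 2` maps them two-to-one onto `T`, the fibre
`{2 ± s}` over `v` having product `v`; so `∏_T c * ∏_T (4 - c) = ∏_T v`.
-/

open scoped Classical

open Finset Polynomial

theorem Finset.prod_filter_sub_left {R M : Type*} [AddCommGroup R] [Fintype R] [CommMonoid M]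
    (P : R → Prop) [DecidablePred P] (c : R) (f : R → M) :
    ∏ a ∈ univ.filter (fun a => P (c - a)), f (c - a) = ∏ a ∈ univ.filter P, f a :=
  prod_equiv (Equiv.subLeft c) (by simp) (by simp)

namespace FiniteField

variable {F : Type*} [Field F] [Fintype F]

theorem card_div_two_ne_zero : Fintype.card F / 2 ≠ 0 :=
  (Nat.div_pos Fintype.one_lt_card two_pos).ne'

theorem not_isSquare_iff_pow_card_div_two_eq_neg_one (hF : ringChar F ≠ 2) {a : F} :
    ¬IsSquare a ↔ a ^ (Fintype.card F / 2) = -1 := by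
  rcases eq_or_ne a 0 with rfl | ha
  · simp [zero_pow card_div_two_ne_zero]
  · have h1 : (1 : F) ≠ -1 := (Ring.neg_one_ne_one_of_char_ne_two hF).symm
    rw [isSquare_iff hF ha]
    rcases pow_dichotomy hF ha with h | h <;> simp [h, h1, h1.symm]

theorem isSquare_mul_iff {a b : F} (ha : a ≠ 0) (hb : b ≠ 0) :
    IsSquare (a * b) ↔ (IsSquare a ↔ IsSquare b) := by
  have hχ : ∀ {x : F}, x ≠ 0 → (IsSquare x ↔ quadraticChar F x = 1) :=
    fun hx => (quadraticChar_one_iff_isSquare hx).symm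
  rw [hχ (mul_ne_zero ha hb), hχ ha, hχ hb, map_mul]
  rcases quadraticChar_dichotomy ha with h | h <;>
    rcases quadraticChar_dichotomy hb with h' | h' <;> simp [h, h']

theorem X_pow_card_div_two_add_one_dvd (hF : ringChar F ≠ 2) :
    (X ^ (Fintype.card F / 2) + 1 : F[X]) ∣ X ^ Fintype.card F - X := by
  have hq : Fintype.card F = 2 * (Fintype.card F / 2) + 1 := by
    have := odd_card_of_char_ne_two hF
    omega
  refine Dvd.intro_left (X * (X ^ (Fintype.card F / 2) - 1)) ?_
  conv_rhs => rw [hq]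
  ring

theorem roots_X_pow_card_div_two_add_one (hF : ringChar F ≠ 2) :
    (X ^ (Fintype.card F / 2) + 1 : F[X]).roots =
      (univ.filter fun a : F => ¬IsSquare a).val := by
  have hne : (X ^ Fintype.card F - X : F[X]) ≠ 0 :=
    X_pow_card_sub_X_ne_zero F Fintype.one_lt_card
  have hdvd := X_pow_card_div_two_add_one_dvd hF
  have hle := roots.le_of_dvd hne hdvd
  rw [roots_X_pow_card_sub_X] at hle
  refine (Multiset.Nodup.ext (Multiset.nodup_of_le hle univ.nodup) (Finset.nodup _)).mpr
    fun a => ?_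
  rw [mem_roots (ne_zero_of_dvd_ne_zero hne hdvd), Finset.mem_val, mem_filter,
    not_isSquare_iff_pow_card_div_two_eq_neg_one hF]
  simp [eq_neg_iff_add_eq_zero]

theorem prod_filter_not_isSquare_sub (hF : ringChar F ≠ 2) (x : F) :
    ∏ a ∈ univ.filter (fun a : F => ¬IsSquare a), (x - a) = x ^ (Fintype.card F / 2) + 1 := by
  have hsplit : (X ^ Fintype.card F - X : F[X]).Splits := by
    rw [splits_iff_card_roots, roots_X_pow_card_sub_X,
      X_pow_card_sub_X_natDegree_eq F Fintype.one_lt_card]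
    rfl
  have h := (hsplit.of_dvd (X_pow_card_sub_X_ne_zero F Fintype.one_lt_card)
    (X_pow_card_div_two_add_one_dvd hF)).eval_eq_prod_roots_of_monic
      (monic_X_pow_add_C 1 card_div_two_ne_zero) x
  simpa [roots_X_pow_card_div_two_add_one hF, Finset.prod_eq_multiset_prod] using h.symm

theorem prod_filter_mul_four_sub_eq_self (h2 : (2 : F) ≠ 0) {v s : F} (hs : s ≠ 0)
    (hv : 4 - v = s * s) : ∏ a ∈ univ.filter (fun a : F => a * (4 - a) = v), a = v := by
  have hfiber : univ.filter (fun a : F => a * (4 - a) = v) = {2 + s, 2 - s} := by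
    ext a
    simp only [mem_filter, mem_univ, true_and, mem_insert, mem_singleton]
    constructor
    · intro h
      have : (a - (2 + s)) * (a - (2 - s)) = 0 := by linear_combination hv - h
      rcases mul_eq_zero.mp this with h | h
      · exact .inl (by linear_combination h)
      · exact .inr (by linear_combination h)
    · rintro (rfl | rfl) <;> linear_combination hv
  have hne : (2 : F) + s ≠ 2 - s := fun h => hs <| by
    have : (2 : F) * s = 0 := by linear_combination h
    exact (mul_eq_zero.mp this).resolve_left h2
  rw [hfiber, prod_pair hne]
  linear_combination hv

theorem prod_filter_not_isSquare_mul_four_sub (h2 : (2 : F) ≠ 0) :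
    ∏ a ∈ univ.filter (fun a : F => ¬IsSquare (a * (4 - a))), a =
      ∏ v ∈ univ.filter (fun v : F => ¬IsSquare v ∧ IsSquare (4 - v)), v := by
  set T := univ.filter (fun v : F => ¬IsSquare v ∧ IsSquare (4 - v))
  have hA : univ.filter (fun a : F => ¬IsSquare (a * (4 - a))) =
      univ.filter (fun a : F => a * (4 - a) ∈ T) :=
    filter_congr fun a _ => by simpa [T] using fun _ => ⟨2 - a, by ring⟩
  rw [hA, ← prod_fiberwise_eq_prod_filter]
  refine prod_congr rfl fun v hv => ?_
  obtain ⟨hv, s, hs⟩ := (mem_filter.mp hv).2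
  refine prod_filter_mul_four_sub_eq_self h2 (fun hs0 => hv ⟨2, ?_⟩) hs
  subst hs0
  linear_combination -hs

theorem not_isSquare_mul_four_sub_iff {a : F} :
    ¬IsSquare (a * (4 - a)) ↔
      ¬IsSquare a ∧ IsSquare (4 - a) ∨ IsSquare a ∧ ¬IsSquare (4 - a) := by
  have h4 : IsSquare (4 : F) := ⟨2, by norm_num⟩
  rcases eq_or_ne a 0 with rfl | ha
  · simp [h4]
  rcases eq_or_ne (4 - a) 0 with hb | hb
  · obtain rfl : a = 4 := (sub_eq_zero.mp hb).symm
    simp [h4]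
  rw [isSquare_mul_iff ha hb]
  tauto

theorem prod_filter_not_isSquare_mul_four_sub_eq_mul :
    ∏ a ∈ univ.filter (fun a : F => ¬IsSquare (a * (4 - a))), a =
      (∏ c ∈ univ.filter (fun c : F => ¬IsSquare c ∧ IsSquare (4 - c)), c) *
        ∏ c ∈ univ.filter (fun c : F => ¬IsSquare c ∧ IsSquare (4 - c)), (4 - c) := by
  rw [← prod_filter_mul_prod_filter_not _ (fun a => ¬IsSquare a), filter_filter, filter_filter,
    ← prod_filter_sub_left _ 4 (fun c => 4 - c)]
  simp only [sub_sub_cancel]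
  congr 1 <;>
    refine prod_congr (filter_congr fun a _ => ?_) fun _ _ => rfl <;>
    rw [not_isSquare_mul_four_sub_iff] <;> tauto

theorem prod_filter_four_sub_eq_one (h2 : (2 : F) ≠ 0) :
    ∏ c ∈ univ.filter (fun c : F => ¬IsSquare c ∧ IsSquare (4 - c)), (4 - c) = 1 := by
  have h := (prod_filter_not_isSquare_mul_four_sub h2).symm.trans
    prod_filter_not_isSquare_mul_four_sub_eq_mul
  refine (mul_eq_left₀ ?_).mp h.symm
  exact prod_ne_zero_iff.mpr fun c hc hc0 => (mem_filter.mp hc).2.1 (hc0 ▸ IsSquare.zero)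

end FiniteField

/-- The product of all `a ∈ F_q` such that both `a` and `4 - a` are
nonsquares in `F_q` equals `2`. -/
theorem prod_nonsquares_eq_two {F : Type*} [Field F] [Fintype F]
    (hq : Odd (Fintype.card F)) :
    ∏ a ∈ Finset.univ.filter (fun a : F => ¬ IsSquare a ∧ ¬ IsSquare (4 - a)), a = 2 := by
  have hF : ringChar F ≠ 2 := fun h => by
    simpa [Nat.odd_iff.mp hq] using FiniteField.even_card_of_char_two h
  have h2 : (2 : F) ≠ 0 := Ring.two_ne_zero hF
  have h4 : (4 : F) ^ (Fintype.card F / 2) = 1 := by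
    rw [show (4 : F) = 2 ^ 2 by norm_num, ← pow_mul, Nat.two_mul_odd_div_two (Nat.odd_iff.mp hq)]
    exact FiniteField.pow_card_sub_one_eq_one 2 h2
  have h := FiniteField.prod_filter_not_isSquare_sub hF 4
  rw [h4, one_add_one_eq_two, ← prod_filter_mul_prod_filter_not _ (fun a => IsSquare (4 - a)),
    filter_filter, filter_filter, FiniteField.prod_filter_four_sub_eq_one h2, one_mul] at h
  rw [← h, ← prod_filter_sub_left (fun a => ¬IsSquare a ∧ ¬IsSquare (4 - a)) 4 (fun a => a)]
  refine prod_congr (filter_congr fun a _ => ?_) fun _ _ => rfl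
  rw [sub_sub_cancel, and_comm]
end

section
/- The product of all a ∈ F_q such that both -a and 4 + a are nonsquares in F_q equals χ(2) · 2. -/
open scoped Classical

/-!
Put `n = -a` and `k = (q - 1) / 2`; the product becomes `(-1) ^ #M * ∏ n ∈ M, n` with
`M = {n | n and 4 - n are nonsquares}`. The involution `n ↦ 4 - n` of `M` fixes only `2`, and
`2 ∈ M` iff `2` is a nonsquare, so `(-1) ^ #M = χ 2`.

The map `t ↦ (1 + t)² / t` sends the nonsquares `t ≠ -1` two-to-one onto the nonsquares `n` with
`n (n - 4)` a square, and `∏ n` over these equals `∏ (1 + t)`. This set is `M` if `-1` is a square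
and the complement of `M` among the nonsquares otherwise. By Euler's criterion the nonsquares are
exactly the `k` roots of `X ^ k + 1`, so evaluating this polynomial at `-1` and `0` (and its
derivative at `-1` when `-1` is a root) yields `∏ n ∈ M, n = 2` in both cases.
-/

open Finset Polynomial

theorem Finset.prod_eq_prod_of_fibers_eq_pair {ι κ M : Type*} [CommMonoid M] [DecidableEq κ]
    {s : Finset ι} {t : Finset κ} {g : ι → κ} (hg : ∀ i ∈ s, g i ∈ t) {f : ι → M} {h : κ → M}
    (hfib : ∀ j ∈ t, ∃ a b, a ≠ b ∧ {i ∈ s | g i = j} = {a, b} ∧ f a * f b = h j) :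
    ∏ i ∈ s, f i = ∏ j ∈ t, h j := by
  rw [← prod_fiberwise_of_maps_to hg]
  refine prod_congr rfl fun j hj => ?_
  obtain ⟨a, b, hab, hfiber, hprod⟩ := hfib j hj
  rw [hfiber, prod_pair hab, hprod]

theorem Polynomial.prod_X_sub_C_eq_of_subset_roots {R : Type*} [CommRing R] [IsDomain R]
    {p : R[X]} (hp : p.Monic) {s : Finset R} (hs : s.val ⊆ p.roots) (hcard : p.natDegree ≤ #s) :
    ∏ a ∈ s, (X - C a) = p := by
  have hroots : s.val = p.roots := Multiset.eq_of_le_of_card_le (val_le_iff_val_subset.2 hs)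
    ((card_roots' p).trans hcard)
  rw [prod_eq_multiset_prod, hroots]
  exact prod_multiset_X_sub_C_of_monic_of_roots_card_eq hp
    ((card_roots' p).antisymm (hroots ▸ hcard))

section OneAddSqDiv

variable {F : Type*} [Field F]

theorem isSquare_one_add_sq_div_iff {t : F} (ht : t ≠ 0) (ht' : 1 + t ≠ 0) :
    IsSquare ((1 + t) ^ 2 / t) ↔ IsSquare t := by
  refine ⟨fun h => ?_, fun h => (IsSquare.sq _).div h⟩
  have ht_eq : t = (1 + t) ^ 2 / t * (t / (1 + t)) ^ 2 := by field_simp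
  rw [ht_eq]
  exact h.mul (IsSquare.sq _)

theorem isSquare_one_add_sq_div_mul_sub_four (t : F) :
    IsSquare ((1 + t) ^ 2 / t * ((1 + t) ^ 2 / t - 4)) := by
  rcases eq_or_ne t 0 with rfl | ht
  · simp
  · exact ⟨(1 + t) * (1 - t) / t, by field_simp; ring⟩

theorem exists_pair_one_add_sq_div_eq [NeZero (2 : F)] {n : F} (hsq : IsSquare (n * (n - 4)))
    (hne : n * (n - 4) ≠ 0) :
    ∃ t₀ t₁ : F, t₀ ≠ t₁ ∧ (1 + t₀) * (1 + t₁) = n ∧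
      ∀ t, (1 + t) ^ 2 / t = n ↔ t = t₀ ∨ t = t₁ := by
  obtain ⟨r, hr⟩ := hsq
  have hr0 : r ≠ 0 := by rintro rfl; exact hne (by simpa using hr)
  have hn0 : n ≠ 0 := left_ne_zero_of_mul hne
  have hdisc : discrim 1 (2 - n) 1 = r * r := by rw [discrim]; linear_combination hr
  refine ⟨(-(2 - n) + r) / (2 * 1), (-(2 - n) - r) / (2 * 1), ?_, ?_, fun t => ?_⟩
  · intro h
    have h2r : 2 * r = 0 := by field_simp at h; linear_combination h
    exact hr0 ((mul_eq_zero.mp h2r).resolve_left two_ne_zero)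
  · field_simp
    linear_combination hr
  · rw [← quadratic_eq_zero_iff one_ne_zero hdisc]
    rcases eq_or_ne t 0 with rfl | ht
    · simp [hn0.symm]
    · rw [div_eq_iff ht]
      constructor <;> intro h <;> linear_combination h

end OneAddSqDiv

section FiniteField

variable {F : Type*} [Field F] [Fintype F]

theorem isSquare_mul_iff_of_ringChar_ne_two (hF : ringChar F ≠ 2) {a b : F} (ha : a ≠ 0)
    (hb : b ≠ 0) : IsSquare (a * b) ↔ (IsSquare a ↔ IsSquare b) := by
  rw [FiniteField.isSquare_iff hF (mul_ne_zero ha hb), FiniteField.isSquare_iff hF ha,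
    FiniteField.isSquare_iff hF hb, mul_pow]
  have := Ring.neg_one_ne_one_of_char_ne_two hF
  rcases FiniteField.pow_dichotomy hF ha with h | h <;>
    rcases FiniteField.pow_dichotomy hF hb with h' | h' <;> simp [h, h', this]

theorem card_div_two_ne_zero_of_ringChar_ne_two (hF : ringChar F ≠ 2) :
    Fintype.card F / 2 ≠ 0 := by
  have hodd := FiniteField.odd_card_of_char_ne_two hF
  have htwo := Fintype.one_lt_card (α := F)
  omega

variable (F) in
noncomputable def nonsquares : Finset F := {a | ¬IsSquare a}

theorem pow_card_div_two_eq_neg_one_iff (hF : ringChar F ≠ 2) {a : F} :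
    a ^ (Fintype.card F / 2) = -1 ↔ ¬IsSquare a := by
  rcases eq_or_ne a 0 with rfl | ha
  · simp [zero_pow (card_div_two_ne_zero_of_ringChar_ne_two hF)]
  · rw [FiniteField.isSquare_iff hF ha]
    have := Ring.neg_one_ne_one_of_char_ne_two hF
    rcases FiniteField.pow_dichotomy hF ha with h | h <;> simp [h, this, this.symm]

theorem nonsquares_val_subset_roots (hF : ringChar F ≠ 2) :
    (nonsquares F).val ⊆ (X ^ (Fintype.card F / 2) + C (1 : F)).roots := by
  intro a ha
  rw [mem_roots (monic_X_pow_add_C 1 (card_div_two_ne_zero_of_ringChar_ne_two hF)).ne_zero]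
  simp_all [nonsquares, ← pow_card_div_two_eq_neg_one_iff hF]

theorem card_nonsquares (hF : ringChar F ≠ 2) : #(nonsquares F) = Fintype.card F / 2 := by
  have hk := card_div_two_ne_zero_of_ringChar_ne_two hF
  set k := Fintype.card F / 2
  set S : Finset F := {a | a ^ k = 1}
  have hN : #(nonsquares F) ≤ k :=
    (card_le_degree_of_subset_roots (nonsquares_val_subset_roots hF)).trans
      natDegree_X_pow_add_C.le
  have hS : #S ≤ k := by
    refine (card_le_degree_of_subset_roots (p := X ^ k - C 1) fun a ha => ?_).trans
      natDegree_X_pow_sub_C.le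
    rw [mem_roots (monic_X_pow_sub_C (1 : F) hk).ne_zero, IsRoot, eval_sub, eval_pow, eval_X,
      eval_C, sub_eq_zero]
    exact (mem_filter.mp ha).2
  have hpartition : S ∪ nonsquares F = univ.erase 0 := by
    ext a
    simp only [S, nonsquares, mem_union, mem_filter, mem_univ, true_and, mem_erase, and_true,
      ← pow_card_div_two_eq_neg_one_iff hF]
    rcases eq_or_ne a 0 with rfl | ha
    · simp [k, zero_pow hk]
    · simpa [ha] using FiniteField.pow_dichotomy hF ha
  have hdisjoint : Disjoint S (nonsquares F) := by
    refine disjoint_filter.mpr fun a _ ha => ?_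
    rw [← pow_card_div_two_eq_neg_one_iff hF, ha]
    exact (Ring.neg_one_ne_one_of_char_ne_two hF).symm
  have hsum := card_union_of_disjoint hdisjoint
  rw [hpartition, card_erase_of_mem (mem_univ 0), card_univ] at hsum
  have hodd := FiniteField.odd_card_of_char_ne_two hF
  omega

theorem prod_X_sub_C_nonsquares (hF : ringChar F ≠ 2) :
    ∏ t ∈ nonsquares F, (X - C t) = X ^ (Fintype.card F / 2) + C 1 :=
  prod_X_sub_C_eq_of_subset_roots (monic_X_pow_add_C 1 (card_div_two_ne_zero_of_ringChar_ne_two hF))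
    (nonsquares_val_subset_roots hF) (natDegree_X_pow_add_C.trans (card_nonsquares hF).symm).le

theorem prod_nonsquares (hF : ringChar F ≠ 2) :
    ∏ t ∈ nonsquares F, t = (-1) ^ (Fintype.card F / 2) := by
  have h := congrArg (eval 0) (prod_X_sub_C_nonsquares hF)
  simp only [eval_prod, eval_sub, eval_X, eval_C, zero_sub, eval_add, eval_pow,
    zero_pow (card_div_two_ne_zero_of_ringChar_ne_two hF), zero_add] at h
  rw [prod_neg, card_nonsquares hF] at h
  rw [eq_inv_of_mul_eq_one_right h, ← inv_pow, inv_neg_one]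

theorem prod_one_add_nonsquares (hF : ringChar F ≠ 2) :
    ∏ t ∈ nonsquares F, (1 + t) =
      (-1) ^ (Fintype.card F / 2) * ((-1) ^ (Fintype.card F / 2) + 1) := by
  have h := congrArg (eval (-1)) (prod_X_sub_C_nonsquares hF)
  simp only [eval_prod, eval_sub, eval_X, eval_C, eval_add, eval_pow] at h
  rw [← h, ← card_nonsquares hF, ← prod_neg]
  exact prod_congr rfl fun t _ => by ring

theorem prod_one_add_nonsquares_erase (hF : ringChar F ≠ 2) (h : ¬IsSquare (-1 : F)) :
    ∏ t ∈ (nonsquares F).erase (-1), (1 + t) = (Fintype.card F / 2 : ℕ) := by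
  have hmem : (-1 : F) ∈ nonsquares F := by simpa [nonsquares] using h
  have hodd : Odd (Fintype.card F / 2) := by
    rw [← neg_one_pow_eq_neg_one_iff_odd (Ring.neg_one_ne_one_of_char_ne_two hF)]
    exact (pow_card_div_two_eq_neg_one_iff hF).mpr h
  have hpow : (-1 : F) ^ (Fintype.card F / 2 - 1) = 1 := (Nat.Odd.sub_odd hodd odd_one).neg_one_pow
  have hderiv := eval_multiset_prod_X_sub_C_derivative (S := (nonsquares F).val) hmem
  rw [← prod_eq_multiset_prod, prod_X_sub_C_nonsquares hF, ← erase_val,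
    ← prod_eq_multiset_prod] at hderiv
  simp only [derivative_add, derivative_X_pow, derivative_C, add_zero, eval_mul, eval_C,
    eval_pow, eval_X, hpow, mul_one] at hderiv
  calc ∏ t ∈ (nonsquares F).erase (-1), (1 + t)
      = (-1) ^ #((nonsquares F).erase (-1)) * ∏ t ∈ (nonsquares F).erase (-1), (-1 - t) := by
        rw [← prod_neg]; exact prod_congr rfl fun t _ => by ring
    _ = (Fintype.card F / 2 : ℕ) := by
        rw [card_erase_of_mem hmem, card_nonsquares hF, hpow, one_mul, hderiv]

theorem isSquare_mul_sub_four_iff (hF : ringChar F ≠ 2) {n : F} (hn : ¬IsSquare n) :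
    IsSquare (n * (n - 4)) ↔ (IsSquare (-1 : F) ↔ ¬IsSquare (4 - n)) := by
  have hn0 : n ≠ 0 := by rintro rfl; exact hn IsSquare.zero
  have hn4 : 4 - n ≠ 0 := fun h => hn ⟨2, by linear_combination -h⟩
  rw [show n * (n - 4) = n * (-1 * (4 - n)) by ring, isSquare_mul_iff_of_ringChar_ne_two hF hn0
    (mul_ne_zero (neg_ne_zero.mpr one_ne_zero) hn4),
    isSquare_mul_iff_of_ringChar_ne_two hF (neg_ne_zero.mpr one_ne_zero) hn4]
  tauto

-- The fibre of `t ↦ (1 + t)² / t` through `t` is `{t, t⁻¹}`, and `(1 + t)(1 + t⁻¹) = (1 + t)² / t`.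
theorem prod_filter_isSquare_mul_sub_four (hF : ringChar F ≠ 2) :
    ∏ n ∈ nonsquares F with IsSquare (n * (n - 4)), n =
      ∏ t ∈ (nonsquares F).erase (-1), (1 + t) := by
  have : NeZero (2 : F) := ⟨Ring.two_ne_zero hF⟩
  symm
  refine prod_eq_prod_of_fibers_eq_pair (g := fun t => (1 + t) ^ 2 / t) (fun t ht => ?_)
    fun n hn => ?_
  · obtain ⟨ht1, ht⟩ := mem_erase.mp ht
    have ht0 : t ≠ 0 := by rintro rfl; exact (mem_filter.mp ht).2 IsSquare.zero
    have ht1' : 1 + t ≠ 0 := fun h => ht1 (by linear_combination h)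
    simp only [nonsquares, mem_filter, mem_univ, true_and] at ht ⊢
    exact ⟨(isSquare_one_add_sq_div_iff ht0 ht1').not.mpr ht,
      isSquare_one_add_sq_div_mul_sub_four t⟩
  · simp only [nonsquares, mem_filter, mem_univ, true_and] at hn
    obtain ⟨hns, hsq⟩ := hn
    have hne : n * (n - 4) ≠ 0 := mul_ne_zero (by rintro rfl; exact hns IsSquare.zero)
      fun h => hns ⟨2, by linear_combination h⟩
    obtain ⟨t₀, t₁, hne₀₁, hprod, hfiber⟩ := exists_pair_one_add_sq_div_eq hsq hne
    refine ⟨t₀, t₁, hne₀₁, ?_, hprod⟩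
    ext t
    rw [mem_filter, mem_insert, mem_singleton, ← hfiber]
    refine ⟨And.right, fun hgt => ⟨?_, hgt⟩⟩
    have ht0 : t ≠ 0 := by rintro rfl; exact hns (by simp [← hgt])
    have ht1 : 1 + t ≠ 0 := fun h => hns (by simp [← hgt, h])
    refine mem_erase.mpr ⟨fun h => ht1 (by rw [h]; ring), ?_⟩
    simpa [nonsquares, ← isSquare_one_add_sq_div_iff ht0 ht1, hgt] using hns

variable (F) in
noncomputable def nonsquareSplitsOfFour : Finset F := {n | ¬IsSquare n ∧ ¬IsSquare (4 - n)}

theorem prod_nonsquareSplitsOfFour (hF : ringChar F ≠ 2) :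
    ∏ n ∈ nonsquareSplitsOfFour F, n = 2 := by
  have hsplit : nonsquareSplitsOfFour F = {n ∈ nonsquares F | ¬IsSquare (4 - n)} := by
    simp [nonsquareSplitsOfFour, nonsquares, filter_filter]
  by_cases hm1 : IsSquare (-1 : F)
  · have hpow : (-1 : F) ^ (Fintype.card F / 2) = 1 :=
      (FiniteField.isSquare_iff hF (neg_ne_zero.mpr one_ne_zero)).mp hm1
    have hm1' : (-1 : F) ∉ nonsquares F := by simpa [nonsquares] using hm1
    have hD : {n ∈ nonsquares F | ¬IsSquare (4 - n)} =
        {n ∈ nonsquares F | IsSquare (n * (n - 4))} := filter_congr fun n hn => by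
      rw [isSquare_mul_sub_four_iff hF (mem_filter.mp hn).2]
      tauto
    rw [hsplit, hD, prod_filter_isSquare_mul_sub_four hF, erase_eq_of_notMem hm1',
      prod_one_add_nonsquares hF, hpow]
    norm_num
  · have hE : ∏ n ∈ nonsquares F with IsSquare (4 - n), n = (Fintype.card F / 2 : ℕ) := by
      rw [← prod_one_add_nonsquares_erase hF hm1, ← prod_filter_isSquare_mul_sub_four hF]
      refine prod_congr (filter_congr fun n hn => ?_) fun _ _ => rfl
      rw [isSquare_mul_sub_four_iff hF (mem_filter.mp hn).2]
      tauto
    have hN := prod_nonsquares hF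
    rw [(pow_card_div_two_eq_neg_one_iff hF).mpr hm1, ← prod_filter_not_mul_prod_filter _
      fun n => IsSquare (4 - n), hE, ← hsplit] at hN
    have hcard : (2 : F) * (Fintype.card F / 2 : ℕ) = -1 := by
      have hq := FiniteField.cast_card_eq_zero F
      rw [← Nat.two_mul_div_two_add_one_of_odd (Nat.odd_iff.mpr
        (FiniteField.odd_card_of_char_ne_two hF))] at hq
      push_cast at hq
      linear_combination hq
    have hk : ((Fintype.card F / 2 : ℕ) : F) ≠ 0 :=
      right_ne_zero_of_mul (by rw [hcard]; exact neg_ne_zero.mpr one_ne_zero)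
    exact mul_right_cancel₀ hk (hN.trans hcard.symm)

theorem neg_one_pow_card_nonsquareSplitsOfFour (hF : ringChar F ≠ 2) :
    (-1 : F) ^ #(nonsquareSplitsOfFour F) = χ (2 : F) := by
  have h2 : (2 : F) ≠ 0 := Ring.two_ne_zero hF
  have hpair : ∏ _n ∈ (nonsquareSplitsOfFour F).erase 2, (-1 : F) = 1 := by
    refine prod_involution (fun n _ => 4 - n) (fun _ _ => by norm_num) (fun n hn _ => ?_)
      (fun n hn => ?_) (fun n _ => by ring)
    · intro h
      exact (mem_erase.mp hn).1 (mul_left_cancel₀ h2 (by linear_combination -h))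
    · obtain ⟨hn2, hn⟩ := mem_erase.mp hn
      simp only [nonsquareSplitsOfFour, mem_filter, mem_univ, true_and] at hn ⊢
      exact mem_erase.mpr ⟨fun h => hn2 (by linear_combination -h), by simpa using hn.symm⟩
  rw [prod_const] at hpair
  by_cases hsq : IsSquare (2 : F)
  · have h2M : (2 : F) ∉ nonsquareSplitsOfFour F := by simp [nonsquareSplitsOfFour, hsq]
    rw [erase_eq_of_notMem h2M] at hpair
    simp [hpair, χ, h2, hsq]
  · have h2M : (2 : F) ∈ nonsquareSplitsOfFour F := by
      simp [nonsquareSplitsOfFour, hsq, show (4 : F) - 2 = 2 by norm_num]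
    rw [← card_erase_add_one h2M, pow_succ, hpair]
    simp [χ, h2, hsq]

end FiniteField

/-- The product of all `a ∈ F_q` such that both `-a` and `4 + a` are
nonsquares in `F_q` equals `χ(2) · 2`. -/
theorem prod_nonsquares_eq_chi_two_mul_two {F : Type*} [Field F] [Fintype F]
    (hq : Odd (Fintype.card F)) :
    ∏ a ∈ Finset.univ.filter (fun a : F => ¬ IsSquare (-a) ∧ ¬ IsSquare (4 + a)), a =
      ((χ (2 : F) : ℤ) : F) * 2 := by
  have hF : ringChar F ≠ 2 := fun h =>
    Nat.not_even_iff_odd.mpr hq (Nat.even_iff.mpr (FiniteField.even_card_of_char_two h))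
  calc ∏ a ∈ univ.filter (fun a : F => ¬ IsSquare (-a) ∧ ¬ IsSquare (4 + a)), a
      = ∏ n ∈ nonsquareSplitsOfFour F, -n := by
        refine prod_nbij' (fun a => -a) (fun n => -n) ?_ ?_ (fun a _ => neg_neg a)
          (fun n _ => neg_neg n) (fun a _ => (neg_neg a).symm) <;>
        simp [nonsquareSplitsOfFour, sub_eq_add_neg]
    _ = (χ (2 : F) : F) * 2 := by
        rw [prod_neg, neg_one_pow_card_nonsquareSplitsOfFour hF, prod_nonsquareSplitsOfFour hF]
end

section
/- Let S = {b ∈ F_q : 2 - b is a nonsquare in F_q and 2 + b is a nonzero square in F_q}. Then the map b ↦ b^2 - 2 is a bijection from S to S. -/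
/-!
Since `2 - (b² - 2) = (2 - b)(2 + b)` and `2 + (b² - 2) = b²`, the map sends the set into itself:
a nonsquare times a nonzero square is a nonsquare. It is injective there because `a² = b²` with
`a = -b` would make `2 - b = 2 + a` both a square and a nonsquare. For surjectivity, write
`2 + c = r²`; then `(2 - r)(2 + r) = 2 - c` is a nonsquare, and in a finite field this forces
exactly one of `2 ± r` to be a square, which picks the preimage `r` or `-r`.
-/

open Set

def twoSubNonsqTwoAddSq (F : Type*) [Field F] : Set F :=
  {b | ¬ IsSquare (2 - b) ∧ IsSquare (2 + b) ∧ 2 + b ≠ 0}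

section

variable {F : Type*} [Field F]

theorem FiniteField.isSquare_mul_of_not_isSquare [Fintype F] {a b : F}
    (ha : ¬ IsSquare a) (hb : ¬ IsSquare b) : IsSquare (a * b) := by
  classical
  have hab : a * b ≠ 0 :=
    mul_ne_zero (fun h => ha (h ▸ IsSquare.zero)) (fun h => hb (h ▸ IsSquare.zero))
  rw [← quadraticChar_one_iff_isSquare hab, map_mul,
    quadraticChar_neg_one_iff_not_isSquare.mpr ha, quadraticChar_neg_one_iff_not_isSquare.mpr hb]
  norm_num

theorem mapsTo_sq_sub_two :
    MapsTo (fun b : F => b ^ 2 - 2) (twoSubNonsqTwoAddSq F) (twoSubNonsqTwoAddSq F) := by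
  rintro b ⟨hminus, hplus, hplus0⟩
  have hb : b ≠ 0 := by
    rintro rfl
    exact hminus (by simpa using hplus)
  refine ⟨?_, ?_, ?_⟩
  · rw [show 2 - (b ^ 2 - 2) = (2 - b) * (2 + b) by ring]
    exact fun h => hminus (by simpa [hplus0] using h.div hplus)
  · simpa using IsSquare.sq b
  · simpa using hb

theorem injOn_sq_sub_two : InjOn (fun b : F => b ^ 2 - 2) (twoSubNonsqTwoAddSq F) := by
  rintro a ⟨-, ha, -⟩ b ⟨hb, -, -⟩ hab
  rcases mul_eq_zero.mp (show (a - b) * (a + b) = 0 by linear_combination hab) with h | h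
  · exact sub_eq_zero.mp h
  · exact absurd ((show 2 - b = 2 + a by linear_combination -h) ▸ ha) hb

theorem mem_twoSubNonsqTwoAddSq_of_sq_sub_two {c s : F} (hc : ¬ IsSquare (2 - c))
    (hs : s ^ 2 - 2 = c) (hplus : IsSquare (2 + s)) : s ∈ twoSubNonsqTwoAddSq F := by
  have hprod : (2 - s) * (2 + s) = 2 - c := by linear_combination -hs
  refine ⟨fun hminus => hc (hprod ▸ hminus.mul hplus), hplus, fun h0 => hc ?_⟩
  rw [← hprod, h0, mul_zero]
  exact IsSquare.zero

theorem surjOn_sq_sub_two [Fintype F] :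
    SurjOn (fun b : F => b ^ 2 - 2) (twoSubNonsqTwoAddSq F) (twoSubNonsqTwoAddSq F) := by
  rintro c ⟨hc, ⟨r, hr⟩, -⟩
  have hr2 : r ^ 2 - 2 = c := by linear_combination -hr
  by_cases hplus : IsSquare (2 + r)
  · exact ⟨r, mem_twoSubNonsqTwoAddSq_of_sq_sub_two hc hr2 hplus, hr2⟩
  · have hminus : IsSquare (2 + -r) := by
      by_contra hminus
      refine hc ?_
      rw [show 2 - c = (2 + -r) * (2 + r) by linear_combination -hr]
      exact FiniteField.isSquare_mul_of_not_isSquare hminus hplus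
    have hr2' : (-r) ^ 2 - 2 = c := by linear_combination -hr
    exact ⟨-r, mem_twoSubNonsqTwoAddSq_of_sq_sub_two hc hr2' hminus, hr2'⟩

end

theorem sq_sub_two_bijOn_general {F : Type*} [Field F] [Fintype F] :
    Set.BijOn (fun b : F => b ^ 2 - 2)
      {b : F | ¬ IsSquare (2 - b) ∧ (IsSquare (2 + b) ∧ 2 + b ≠ 0)}
      {b : F | ¬ IsSquare (2 - b) ∧ (IsSquare (2 + b) ∧ 2 + b ≠ 0)} :=
  ⟨mapsTo_sq_sub_two, injOn_sq_sub_two, surjOn_sq_sub_two⟩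

/-- Let `S = {b ∈ F_q : 2 - b is a nonsquare and 2 + b is a nonzero
square}`. Then `b ↦ b² - 2` is a bijection from `S` to `S`. -/
theorem sq_sub_two_bijOn {F : Type*} [Field F] [Fintype F]
    (hq : Odd (Fintype.card F)) :
    Set.BijOn (fun b : F => b ^ 2 - 2)
      {b : F | ¬ IsSquare (2 - b) ∧ (IsSquare (2 + b) ∧ 2 + b ≠ 0)}
      {b : F | ¬ IsSquare (2 - b) ∧ (IsSquare (2 + b) ∧ 2 + b ≠ 0)} :=
  sq_sub_two_bijOn_general
end
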